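/- arXiv:2406.03946 — 2 statements merged into one kernel-verified Lean document; each statement's English description precedes it below -/
import Mathlib

section
/- Residual Pathway Priors correspond to a fixed (non-learnable) likelihood in the weighted averaging framework: let G be a finite group, ρ : G → Matrix (Fin d) (Fin d) ℝ a representation (ρ(1) = 1 and ρ(g * h) = ρ(g) * ρ(h) for all g, h), and let σ_a, σ_b be real numbers with σ_b ≠ 0 and σ_a² + σ_b² ≠ 0. Define the likelihood λ : G → ℝ by λ(g) := (1/σ_b²) * (if g = 1 then 1 else 0) + (1/|G|) * (1/(σ_a² + σ_b²) − 1/σ_b²). Then for every v ∈ ℝ^d: Σ_{g ∈ G} λ(g) • (ρ(g)).mulVec v = (1/σ_b²) * (v − Π v) + (1/(σ_a² + σ_b²)) * Π v, where Π v := (1/|G|) Σ_{g ∈ G} (ρ(g)).mulVec v is the averaging projection onto the G-equivariant subspace; i.e. the weighted projection scales the equivariant component of v by 1/(σ_a² + σ_b²) and the non-equivariant residual component by 1/σ_b². -/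
open Matrix

/-- Residual Pathway Priors correspond to a fixed likelihood in the weighted
averaging framework: the weighted projection scales the equivariant component
by `1/(σa² + σb²)` and the non-equivariant residual by `1/σb²`. -/
theorem rpp_is_fixed_likelihood_weighted_averaging
    {G : Type*} [Group G] [Fintype G] [DecidableEq G]
    {d : ℕ}
    (ρ : G → Matrix (Fin d) (Fin d) ℝ)
    (hρ_one : ρ 1 = 1)
    (hρ_mul : ∀ g h : G, ρ (g * h) = ρ g * ρ h)
    (σa σb : ℝ) (hσb : σb ≠ 0) (hσab : σa ^ 2 + σb ^ 2 ≠ 0)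
    (lam : G → ℝ)
    (hlam : ∀ g : G, lam g =
      (1 / σb ^ 2) * (if g = 1 then 1 else 0)
        + (1 / (Fintype.card G : ℝ)) * (1 / (σa ^ 2 + σb ^ 2) - 1 / σb ^ 2))
    (Pi : (Fin d → ℝ) → (Fin d → ℝ))
    (hPi : ∀ v : Fin d → ℝ,
      Pi v = (1 / (Fintype.card G : ℝ)) • ∑ g : G, (ρ g) *ᵥ v) :
    ∀ v : Fin d → ℝ,
      ∑ g : G, lam g • ((ρ g) *ᵥ v)
        = (1 / σb ^ 2) • (v - Pi v) + (1 / (σa ^ 2 + σb ^ 2)) • Pi v := by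
  intro v
  have hcard : (Fintype.card G : ℝ) ≠ 0 := Nat.cast_ne_zero.2 Fintype.card_ne_zero
  have key : ∑ g : G, lam g • ((ρ g) *ᵥ v)
      = ∑ g : G, ((1 / σb ^ 2) * (if g = 1 then 1 else 0)) • ((ρ g) *ᵥ v)
        + ∑ g : G, ((1 / (Fintype.card G : ℝ)) * (1 / (σa ^ 2 + σb ^ 2) - 1 / σb ^ 2)) • ((ρ g) *ᵥ v) := by
    rw [← Finset.sum_add_distrib]
    refine Finset.sum_congr rfl fun g _ => ?_
    rw [hlam g, add_smul]
  rw [key]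
  have h1 : ∑ g : G, ((1 / σb ^ 2) * (if g = 1 then 1 else 0)) • ((ρ g) *ᵥ v)
      = (1 / σb ^ 2) • v := by
    rw [Finset.sum_eq_single (1 : G)]
    · simp [hρ_one]
    · intro g _ hg; simp [hg]
    · simp
  have h2 : ∑ g : G, ((1 / (Fintype.card G : ℝ)) * (1 / (σa ^ 2 + σb ^ 2) - 1 / σb ^ 2)) • ((ρ g) *ᵥ v)
      = (1 / (σa ^ 2 + σb ^ 2) - 1 / σb ^ 2) • Pi v := by
    rw [hPi, ← Finset.smul_sum, smul_smul, mul_comm]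
  rw [h1, h2, smul_sub, sub_smul]
  abel
end

section
/- Convolution with an H-steerable kernel is equivariant with respect to the induced representation of (ℝ^n, +) ⋊ H: let H be a compact group, π : H → Matrix (Fin n) (Fin n) ℝ a continuous homomorphism whose values are orthogonal matrices, and ρ_in, ρ_out orthogonal representations of H of dimensions d_in, d_out. Let K : ℝ^n → Matrix (Fin d_out) (Fin d_in) ℝ be continuous with compact support and satisfy the steerability constraint K(x) = ρ_out(h) * K((π(h))⁻¹ • x) * (ρ_in(h))ᵀ for all h ∈ H and x ∈ ℝ^n. For a bounded continuous feature field f : ℝ^n → ℝ^{d_in}, define the convolution (K ⋆ f)(x) := ∫_{ℝ^n} (K(x − y)).mulVec (f y) dy with respect to Lebesgue measure. Then for every t ∈ ℝ^n and h ∈ H: K ⋆ (Ind_in(t,h) f) = Ind_out(t,h) (K ⋆ f), where (Ind_in(t,h) f)(x) := (ρ_in(h)).mulVec (f ((π(h))⁻¹ • (x − t))) and (Ind_out(t,h) u)(x) := (ρ_out(h)).mulVec (u ((π(h))⁻¹ • (x − t))). -/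
open MeasureTheory Matrix

attribute [local instance] Matrix.normedAddCommGroup Matrix.normedSpace

private lemma integral_comp_mulVec_det_one {n : ℕ} {M : Matrix (Fin n) (Fin n) ℝ}
    (hM : |M.det| = 1) {E : Type*} [NormedAddCommGroup E] [NormedSpace ℝ E]
    (g : (Fin n → ℝ) → E) :
    ∫ y, g (M *ᵥ y) = ∫ y, g y := by
  have hdet : M.det ≠ 0 := by
    intro h0; rw [h0] at hM; simp at hM
  have hmp : MeasurePreserving (Matrix.toLin' M) (volume : Measure (Fin n → ℝ)) volume := by
    refine ⟨(Matrix.toLin' M).continuous_of_finiteDimensional.measurable, ?_⟩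
    rw [Real.map_matrix_volume_pi_eq_smul_volume_pi hdet, abs_inv, hM]
    simp
  have hinv : Invertible M := M.invertibleOfIsUnitDet (isUnit_iff_ne_zero.mpr hdet)
  have hemb : MeasurableEmbedding (Matrix.toLin' M) := by
    have := (M.toLinearEquiv' hinv).toContinuousLinearEquiv.toHomeomorph.measurableEmbedding
    convert this using 1
    funext v; rfl
  exact hmp.integral_comp hemb g

/-- Convolution with an `H`-steerable kernel is equivariant with respect to the
induced representation of `(ℝⁿ, +) ⋊ H`. -/
theorem steerable_kernel_convolution_is_induced_equivariant
    {H : Type*} [Group H] [TopologicalSpace H] [IsTopologicalGroup H]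
    [CompactSpace H] [T2Space H]
    {n d_in d_out : ℕ}
    (π : H → Matrix (Fin n) (Fin n) ℝ)
    (hπ_cont : Continuous π)
    (hπ_one : π 1 = 1)
    (hπ_mul : ∀ g h : H, π (g * h) = π g * π h)
    (hπ_orth : ∀ h : H, π h * (π h)ᵀ = 1)
    (ρin : H → Matrix (Fin d_in) (Fin d_in) ℝ)
    (hρin_cont : Continuous ρin)
    (hρin_one : ρin 1 = 1)
    (hρin_mul : ∀ g h : H, ρin (g * h) = ρin g * ρin h)
    (hρin_orth : ∀ h : H, ρin h * (ρin h)ᵀ = 1)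
    (ρout : H → Matrix (Fin d_out) (Fin d_out) ℝ)
    (hρout_cont : Continuous ρout)
    (hρout_one : ρout 1 = 1)
    (hρout_mul : ∀ g h : H, ρout (g * h) = ρout g * ρout h)
    (hρout_orth : ∀ h : H, ρout h * (ρout h)ᵀ = 1)
    (K : (Fin n → ℝ) → Matrix (Fin d_out) (Fin d_in) ℝ)
    (hK_cont : Continuous K)
    (hK_supp : HasCompactSupport K)
    -- the steerability constraint
    (hK_steer : ∀ (h : H) (x : Fin n → ℝ),
      K x = ρout h * K ((π h)⁻¹ *ᵥ x) * (ρin h)ᵀ)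
    (f : (Fin n → ℝ) → Fin d_in → ℝ)
    (hf_cont : Continuous f)
    (hf_bdd : ∃ C : ℝ, ∀ x : Fin n → ℝ, ‖f x‖ ≤ C)
    -- convolution with the kernel K, w.r.t. Lebesgue measure
    (conv : ((Fin n → ℝ) → Fin d_in → ℝ) → (Fin n → ℝ) → Fin d_out → ℝ)
    (hconv : ∀ (F : (Fin n → ℝ) → Fin d_in → ℝ) (x : Fin n → ℝ),
      conv F x = ∫ y, (K (x - y)) *ᵥ F y)
    -- induced representations on input and output feature fields
    (IndIn : (Fin n → ℝ) → H →
      ((Fin n → ℝ) → Fin d_in → ℝ) → (Fin n → ℝ) → Fin d_in → ℝ)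
    (hIndIn : ∀ (t : Fin n → ℝ) (h : H) (F : (Fin n → ℝ) → Fin d_in → ℝ)
        (x : Fin n → ℝ),
      IndIn t h F x = (ρin h) *ᵥ F ((π h)⁻¹ *ᵥ (x - t)))
    (IndOut : (Fin n → ℝ) → H →
      ((Fin n → ℝ) → Fin d_out → ℝ) → (Fin n → ℝ) → Fin d_out → ℝ)
    (hIndOut : ∀ (t : Fin n → ℝ) (h : H) (u : (Fin n → ℝ) → Fin d_out → ℝ)
        (x : Fin n → ℝ),
      IndOut t h u x = (ρout h) *ᵥ u ((π h)⁻¹ *ᵥ (x - t))) :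
    ∀ (t : Fin n → ℝ) (h : H),
      conv (IndIn t h f) = IndOut t h (conv f) := by
  intro t h
  -- basic facts about the matrices
  set A := (π h)⁻¹ with hA
  have hπ_inv : (π h)⁻¹ = (π h)ᵀ := Matrix.inv_eq_right_inv (hπ_orth h)
  have hdetA : |A.det| = 1 := by
    have h1 : (π h).det * (π h).det = 1 := by
      have := congrArg Matrix.det (hπ_orth h)
      rwa [Matrix.det_mul, Matrix.det_transpose, Matrix.det_one] at this
    have h2 : |(π h).det| = 1 := by
      have : |(π h).det| * |(π h).det| = 1 := by rw [← abs_mul, h1, abs_one]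
      nlinarith [abs_nonneg (π h).det]
    rw [hA, hπ_inv, Matrix.det_transpose, h2]
  have hρinT : (ρin h)ᵀ * ρin h = 1 := mul_eq_one_comm.mp (hρin_orth h)
  funext x
  set c := A *ᵥ (x - t) with hc
  -- the key integrand
  set G : (Fin n → ℝ) → Fin d_out → ℝ := fun z => K (c - z) *ᵥ f z with hG
  have hG_cont : Continuous G := by
    exact (hK_cont.comp (continuous_const.sub continuous_id)).matrix_mulVec hf_cont
  have hG_supp : HasCompactSupport G := by
    have h1 : HasCompactSupport fun z => K (c - z) := by
      refine HasCompactSupport.intro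
        (hK_supp.image (show Continuous fun z : Fin n → ℝ => c - z from continuous_const.sub continuous_id)) fun z hz => ?_
      by_contra hne
      exact hz ⟨c - z, subset_tsupport K hne, sub_sub_cancel c z⟩
    refine h1.mono fun z hz => ?_
    simp only [Function.mem_support] at hz ⊢
    intro h0
    apply hz
    show K (c - z) *ᵥ f z = 0
    rw [h0, Matrix.zero_mulVec]
  have hG_int : Integrable G := hG_cont.integrable_of_hasCompactSupport hG_supp
  -- pointwise identity
  have key : ∀ y : Fin n → ℝ,
      K (x - y) *ᵥ (ρin h *ᵥ f (A *ᵥ (y - t))) = ρout h *ᵥ G (A *ᵥ (y - t)) := by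
    intro y
    have hxy : x - t - (y - t) = x - y := by abel
    have hsub : c - A *ᵥ (y - t) = A *ᵥ (x - y) := by
      rw [hc, ← Matrix.mulVec_sub, hxy]
    show K (x - y) *ᵥ (ρin h *ᵥ f (A *ᵥ (y - t)))
        = ρout h *ᵥ (K (c - A *ᵥ (y - t)) *ᵥ f (A *ᵥ (y - t)))
    rw [hsub]
    conv_lhs => rw [hK_steer h (x - y)]
    rw [← hA, Matrix.mulVec_mulVec,
      Matrix.mul_assoc (ρout h * K (A *ᵥ (x - y))) ((ρin h)ᵀ) (ρin h), hρinT,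
      Matrix.mul_one, ← Matrix.mulVec_mulVec]
  -- the continuous linear map given by ρout h
  let L : ((Fin d_out → ℝ)) →L[ℝ] (Fin d_out → ℝ) :=
    LinearMap.toContinuousLinearMap (Matrix.mulVecLin (ρout h))
  calc conv (IndIn t h f) x
      = ∫ y, K (x - y) *ᵥ (ρin h *ᵥ f (A *ᵥ (y - t))) := by
        rw [hconv]; congr 1; funext y; rw [hIndIn]
    _ = ∫ y, L (G (A *ᵥ (y - t))) := by
        congr 1; funext y; rw [key y]; rfl
    _ = ∫ y, L (G (A *ᵥ y)) := by
        exact integral_sub_right_eq_self (fun y => L (G (A *ᵥ y))) t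
    _ = ∫ z, L (G z) := integral_comp_mulVec_det_one hdetA (fun z => L (G z))
    _ = L (∫ z, G z) := L.integral_comp_comm hG_int
    _ = ρout h *ᵥ ∫ z, G z := rfl
    _ = IndOut t h (conv f) x := by
        rw [hIndOut, hconv, ← hA, ← hc]
end
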